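/- arXiv:1301.1205 — 2 statements merged into one kernel-verified Lean document; each statement's English description precedes it below -/
import Mathlib

section
/- The generalized exponent count in the partition monoid satisfies a cocycle identity: for all τ, ρ, σ ∈ Pₙ, c(τ ∘ ρ, σ) + c(τ, ρ) = c(τ, ρ ∘ σ) + c(ρ, σ), where c(τ,ρ) counts the equivalence classes of the joined relation that are confined to the middle row of vertices. -/
open scoped Classical
open Relation
noncomputable section

/-- Vertices of a diagram: `inl` = unprimed points `n̄`, `inr` = primed points `n̄'`. -/
abbrev DVert (n : ℕ) := Fin n ⊕ Fin n

/-- Tripled vertex set used for gluing: bottom (unprimed of the right factor),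
middle (identified vertices), top (primed of the left factor). -/
abbrev TVert (n : ℕ) := Fin n ⊕ (Fin n ⊕ Fin n)

def embBot (n : ℕ) : DVert n → TVert n := Sum.elim Sum.inl (fun i => Sum.inr (Sum.inl i))
def embTop (n : ℕ) : DVert n → TVert n :=
  Sum.elim (fun i => Sum.inr (Sum.inl i)) (fun i => Sum.inr (Sum.inr i))
def embOut (n : ℕ) : DVert n → TVert n := Sum.elim Sum.inl (fun i => Sum.inr (Sum.inr i))

/-- The minimal equivalence relation `χ` on the tripled vertex set containing
(the embedded copies of) `τ` and `ρ`. -/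
def glue (n : ℕ) (τ ρ : Setoid (DVert n)) : Setoid (TVert n) :=
  EqvGen.setoid (fun x y =>
    (∃ a b, ρ.r a b ∧ x = embBot n a ∧ y = embBot n b) ∨
    (∃ a b, τ.r a b ∧ x = embTop n a ∧ y = embTop n b))

/-- Composition `τ ∘ ρ` in the partition monoid: glue and restrict to the outer vertices. -/
def pcomp (n : ℕ) (τ ρ : Setoid (DVert n)) : Setoid (DVert n) where
  r x y := (glue n τ ρ).r (embOut n x) (embOut n y)
  iseqv := ⟨fun _ => (glue n τ ρ).iseqv.refl _, fun h => (glue n τ ρ).iseqv.symm h,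
    fun h₁ h₂ => (glue n τ ρ).iseqv.trans h₁ h₂⟩

/-- A middle vertex of the tripled vertex set. -/
def isMiddle {n : ℕ} (x : TVert n) : Prop := ∃ i, x = Sum.inr (Sum.inl i)

/-- `c(τ,ρ)`: the number of classes of the glued relation contained in the middle row. -/
def ccount (n : ℕ) (τ ρ : Setoid (DVert n)) : ℕ :=
  {C ∈ (glue n τ ρ).classes | ∀ x ∈ C, isMiddle x}.ncard

/-- A propagating part: one meeting both the unprimed and the primed vertices. -/
def IsPropagating {n : ℕ} (C : Set (DVert n)) : Prop :=
  (∃ i, Sum.inl i ∈ C) ∧ (∃ i, Sum.inr i ∈ C)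

/-- The rank `r(σ)`: the number of propagating parts of `σ`. -/
def prank (n : ℕ) (σ : Setoid (DVert n)) : ℕ :=
  {C ∈ σ.classes | IsPropagating C}.ncard

/-- The anti-involution `⋆` swapping primed and unprimed vertices. -/
def pstar (n : ℕ) (σ : Setoid (DVert n)) : Setoid (DVert n) where
  r x y := σ.r x.swap y.swap
  iseqv := ⟨fun _ => σ.iseqv.refl _, fun h => σ.iseqv.symm h,
    fun h₁ h₂ => σ.iseqv.trans h₁ h₂⟩

/-- Minimal unprimed vertex of a part. -/
def minL {n : ℕ} (C : Set (DVert n)) : ℕ :=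
  sInf {m : ℕ | ∃ j : Fin n, (j : ℕ) = m ∧ Sum.inl j ∈ C}

/-- Minimal primed vertex of a part. -/
def minR {n : ℕ} (C : Set (DVert n)) : ℕ :=
  sInf {m : ℕ | ∃ j : Fin n, (j : ℕ) = m ∧ Sum.inr j ∈ C}

/-- Position of a propagating part `C` of `σ` in the ordering (by minimal elements) of the
intersections of the propagating parts with the unprimed vertices. -/
def posL (n : ℕ) (σ : Setoid (DVert n)) (C : Set (DVert n)) : ℕ :=
  {D ∈ σ.classes | IsPropagating D ∧ minL D < minL C}.ncard

/-- Position of a propagating part `C` of `σ` in the ordering (by minimal elements) of the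
intersections of the propagating parts with the primed vertices. -/
def posR (n : ℕ) (σ : Setoid (DVert n)) (C : Set (DVert n)) : ℕ :=
  {D ∈ σ.classes | IsPropagating D ∧ minR D < minR C}.ncard

/-- The permutation `π_σ ∈ S_k` recording how propagating lines connect the two sides of `σ`
(for a diagram of rank `k`): the unique permutation sending the position of a propagating part
on the unprimed side to its position on the primed side. -/
def permAt (n k : ℕ) (σ : Setoid (DVert n)) : Equiv.Perm (Fin k) :=
  Classical.epsilon (fun π : Equiv.Perm (Fin k) =>
    ∀ C ∈ σ.classes, IsPropagating C → ∀ h : posL n σ C < k,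
      ((π ⟨posL n σ C, h⟩ : Fin k) : ℕ) = posR n σ C)

/-- The product of the partition algebra `𝐏ₙ(δ)` on the free vector space on diagrams. -/
def pmul (n : ℕ) (δ : ℂ) (f g : Setoid (DVert n) →₀ ℂ) : Setoid (DVert n) →₀ ℂ :=
  f.sum fun τ a => g.sum fun ρ b =>
    Finsupp.single (pcomp n τ ρ) (δ ^ ccount n τ ρ * (a * b))

/-- `i(π,s)`: the number of pairs `i < j` with `s i = j` and `π i > π j`. -/
def icount (n : ℕ) (π s : Equiv.Perm (Fin n)) : ℕ :=
  (Finset.univ.filter fun p : Fin n × Fin n => p.1 < p.2 ∧ s p.1 = p.2 ∧ π p.2 < π p.1).card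

/-!
Glue `σ`, `ρ`, `τ` at once on four rows of `n` vertices and count the classes of the result that
lie in the two middle rows. Restricted to the rows other than the second middle one, the four-row
gluing is `glue (τ ∘ ρ) σ`, so the classes meeting the first middle row are counted by
`c(τ ∘ ρ, σ)`; a class of `glue τ ρ` avoiding its outer rows is not enlarged by `σ`, so the
classes inside the second middle row are counted by `c(τ, ρ)`. Reversing the four rows with the
anti-involution `⋆` turns the same count into `c(τ, ρ ∘ σ) + c(ρ, σ)`.
-/

open Function Set

namespace Setoid

variable {α β : Type*}

theorem comap_eq_of_involutive {f : α → α} (hf : Involutive f) {s t : Setoid α}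
    (hst : s ≤ t.comap f) (hts : t ≤ s.comap f) : s = t.comap f := by
  refine le_antisymm hst fun x y h => ?_
  simpa only [comap_rel, hf x, hf y] using hts h

theorem ncard_classes_subset_meet_range (χ : Setoid α) (f : β → α) {M : Set α}
    (hM : (range f)ᶜ ⊆ M) :
    {C ∈ χ.classes | C ⊆ M ∧ (C ∩ range f).Nonempty}.ncard =
      {D ∈ (χ.comap f).classes | D ⊆ f ⁻¹' M}.ncard := by
  have hinj : InjOn (preimage f) {C ∈ χ.classes | C ⊆ M ∧ (C ∩ range f).Nonempty} := by
    rintro C ⟨hC, -, -, hu, u, rfl⟩ C' ⟨hC', -⟩ (h : f ⁻¹' C = f ⁻¹' C')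
    exact eq_of_mem_classes hC hu hC' (show u ∈ f ⁻¹' C' from h ▸ hu)
  rw [← hinj.ncard_image]
  congr 1
  ext D
  constructor
  · rintro ⟨C, ⟨⟨x, rfl⟩, hCM, -, hu, u, rfl⟩, rfl⟩
    refine ⟨⟨u, ?_⟩, preimage_mono hCM⟩
    ext v
    exact ⟨fun h => χ.trans' h (χ.symm' hu), fun h => χ.trans' h hu⟩
  · rintro ⟨⟨u, rfl⟩, hDM⟩
    refine ⟨{x | χ x (f u)}, ⟨mem_classes χ _, fun x hx => ?_, f u, χ.refl' _, u, rfl⟩, rfl⟩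
    by_cases hx' : x ∈ range f
    · obtain ⟨v, rfl⟩ := hx'
      exact hDM hx
    · exact hM hx'

theorem ncard_classes_subset_eq_comap_add [Finite α] (χ : Setoid α) (f : β → α) {M : Set α}
    (hM : (range f)ᶜ ⊆ M) :
    {C ∈ χ.classes | C ⊆ M}.ncard =
      {D ∈ (χ.comap f).classes | D ⊆ f ⁻¹' M}.ncard +
        {C ∈ χ.classes | C ⊆ (range f)ᶜ}.ncard := by
  have hsplit : {C ∈ χ.classes | C ⊆ M} =
      {C ∈ χ.classes | C ⊆ M ∧ (C ∩ range f).Nonempty} ∪ {C ∈ χ.classes | C ⊆ (range f)ᶜ} := by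
    ext C
    simp only [mem_union, mem_ofPred_eq, subset_compl_iff_disjoint_right,
      ← not_disjoint_iff_nonempty_inter]
    have := fun h : Disjoint C (range f) => h.subset_compl_right.trans hM
    tauto
  have hdisj : Disjoint {C ∈ χ.classes | C ⊆ M ∧ (C ∩ range f).Nonempty}
      {C ∈ χ.classes | C ⊆ (range f)ᶜ} := by
    exact disjoint_left.2 fun C ⟨_, _, x, hxC, hx⟩ ⟨_, hC⟩ => hC hxC hx
  rw [hsplit, ncard_union_eq hdisj (toFinite _) (toFinite _),
    ncard_classes_subset_meet_range χ f hM]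

theorem ncard_classes_comap_of_surjective (χ : Setoid α) {f : β → α} (hf : Surjective f)
    (M : Set α) :
    {D ∈ (χ.comap f).classes | D ⊆ f ⁻¹' M}.ncard = {C ∈ χ.classes | C ⊆ M}.ncard := by
  rw [← ncard_classes_subset_meet_range χ f (by simp [hf.range_eq])]
  congr 1
  ext C
  simp only [mem_ofPred_eq, hf.range_eq, inter_univ]
  exact and_congr_right fun hC =>
    and_iff_left (nonempty_of_mem_partition (isPartition_classes χ) hC)

theorem ncard_classes_subset_image {χ : Setoid α} {s : Setoid β} {f : β → α} (hf : Injective f)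
    {K : Set β} (hs : s ≤ χ.comap f)
    (hχ : ∀ u, {v | s v u} ⊆ K → {y | χ y (f u)} ⊆ f '' {v | s v u}) :
    {C ∈ χ.classes | C ⊆ f '' K}.ncard = {D ∈ s.classes | D ⊆ K}.ncard := by
  have himage : ∀ u, {v | s v u} ⊆ K → f '' {v | s v u} = {y | χ y (f u)} := fun u hu =>
    (hχ u hu).antisymm' (image_subset_iff.2 fun v hv => hs hv)
  rw [← hf.image_injective.injOn.ncard_image]
  congr 1
  ext C
  constructor
  · rintro ⟨⟨x, rfl⟩, hCK⟩
    obtain ⟨u, -, rfl⟩ := hCK (χ.refl' x)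
    have hK : {v | s v u} ⊆ K := fun v hv => by
      obtain ⟨w, hw, hwv⟩ := hCK (hs hv)
      exact hf hwv ▸ hw
    exact ⟨_, ⟨mem_classes s u, hK⟩, himage u hK⟩
  · rintro ⟨D, ⟨⟨u, rfl⟩, hDK⟩, rfl⟩
    exact ⟨himage u hDK ▸ mem_classes χ _, image_mono hDK⟩

end Setoid

section Glue

variable {n : ℕ}

theorem glue_rel_embBot {τ ρ : Setoid (DVert n)} {a b : DVert n} (h : ρ.r a b) :
    (glue n τ ρ).r (embBot n a) (embBot n b) :=
  EqvGen.rel _ _ (Or.inl ⟨a, b, h, rfl, rfl⟩)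

theorem glue_rel_embTop {τ ρ : Setoid (DVert n)} {a b : DVert n} (h : τ.r a b) :
    (glue n τ ρ).r (embTop n a) (embTop n b) :=
  EqvGen.rel _ _ (Or.inr ⟨a, b, h, rfl, rfl⟩)

theorem embTop_eq_inr (a : DVert n) : embTop n a = Sum.inr a := by
  cases a <;> rfl

theorem not_isMiddle_embOut (a : DVert n) : ¬ isMiddle (embOut n a) := by
  rintro ⟨i, hi⟩
  cases a <;> simp [embOut] at hi

end Glue

/-- Four rows of vertices: the bottom row, then the two middle rows and the top row of `TVert n`. -/
abbrev QVert (n : ℕ) := Fin n ⊕ TVert n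

/-- The vertices of `glue n (pcomp n τ ρ) σ` inside `QVert n`: every row but the second middle
one. -/
def embSkip (n : ℕ) : TVert n → QVert n :=
  Sum.elim Sum.inl
    (Sum.elim (fun i => Sum.inr (Sum.inl i)) (fun i => Sum.inr (Sum.inr (Sum.inr i))))

def qglue (n : ℕ) (τ ρ σ : Setoid (DVert n)) : Setoid (QVert n) :=
  EqvGen.setoid fun x y =>
    (∃ a b, σ.r a b ∧ x = embSkip n (embBot n a) ∧ y = embSkip n (embBot n b)) ∨
    (∃ a b, ρ.r a b ∧ x = Sum.inr (embBot n a) ∧ y = Sum.inr (embBot n b)) ∨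
    (∃ a b, τ.r a b ∧ x = Sum.inr (embTop n a) ∧ y = Sum.inr (embTop n b))

def midRows (n : ℕ) : Set (QVert n) :=
  {x | ∃ i, x = Sum.inr (Sum.inl i) ∨ x = Sum.inr (Sum.inr (Sum.inl i))}

/-- The class of a vertex of `qglue n τ ρ σ`, read off from `glue n (pcomp n τ ρ) σ` when the
vertex is joined in `glue n τ ρ` to an outer vertex, and from `glue n τ ρ` otherwise. -/
def qLabel (n : ℕ) (τ ρ σ : Setoid (DVert n)) :
    QVert n → Quotient (glue n (pcomp n τ ρ) σ) ⊕ Quotient (glue n τ ρ)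
  | Sum.inl i => Sum.inl (Quotient.mk _ (Sum.inl i))
  | Sum.inr u =>
    if h : ∃ a, (glue n τ ρ).r u (embOut n a) then Sum.inl (Quotient.mk _ (embTop n h.choose))
    else Sum.inr (Quotient.mk _ u)

section FourRows

variable {n : ℕ}

theorem embSkip_embTop (a : DVert n) : embSkip n (embTop n a) = Sum.inr (embOut n a) := by
  cases a <;> rfl

theorem compl_range_embSkip : (range (embSkip n))ᶜ = Sum.inr '' {x | isMiddle x} := by
  ext x
  rcases x with i | i | i | i <;> simp [embSkip, isMiddle]

theorem compl_range_embSkip_subset_midRows : (range (embSkip n))ᶜ ⊆ midRows n := by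
  rw [compl_range_embSkip]
  rintro _ ⟨u, ⟨i, rfl⟩, rfl⟩
  exact ⟨i, Or.inr rfl⟩

theorem preimage_embSkip_midRows : embSkip n ⁻¹' midRows n = {x | isMiddle x} := by
  ext x
  rcases x with i | i | i <;> simp [embSkip, midRows, isMiddle]

variable {τ ρ σ : Setoid (DVert n)}

theorem qLabel_inr_eq_of_rel {u v : TVert n} (h : (glue n τ ρ).r u v) :
    qLabel n τ ρ σ (Sum.inr u) = qLabel n τ ρ σ (Sum.inr v) := by
  set S := glue n τ ρ
  have hout : (∃ a, S.r u (embOut n a)) ↔ ∃ a, S.r v (embOut n a) :=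
    ⟨fun ⟨a, ha⟩ => ⟨a, S.trans (S.symm h) ha⟩, fun ⟨a, ha⟩ => ⟨a, S.trans h ha⟩⟩
  by_cases hu : ∃ a, S.r u (embOut n a)
  · have hv := hout.1 hu
    simp only [qLabel, dif_pos hu, dif_pos hv, Sum.inl.injEq]
    exact Quotient.sound (glue_rel_embTop (S.trans (S.symm hu.choose_spec)
      (S.trans h hv.choose_spec)))
  · simp only [qLabel, dif_neg hu, dif_neg (mt hout.2 hu), Sum.inr.injEq]
    exact Quotient.sound h

theorem qLabel_inr_embOut (a : DVert n) :
    qLabel n τ ρ σ (Sum.inr (embOut n a)) = Sum.inl (Quotient.mk _ (embTop n a)) := by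
  have h : ∃ b, (glue n τ ρ).r (embOut n a) (embOut n b) := ⟨a, Setoid.refl' _ _⟩
  simp only [qLabel, dif_pos h, Sum.inl.injEq]
  exact Quotient.sound (glue_rel_embTop (Setoid.symm' _ h.choose_spec))

theorem qLabel_embSkip (p : TVert n) :
    qLabel n τ ρ σ (embSkip n p) = Sum.inl (Quotient.mk _ p) := by
  rcases p with i | a
  · rfl
  · rw [← embTop_eq_inr, embSkip_embTop, qLabel_inr_embOut]

theorem qglue_le_ker_qLabel : qglue n τ ρ σ ≤ Setoid.ker (qLabel n τ ρ σ) := by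
  refine Setoid.eqvGen_le ?_
  rintro x y (⟨a, b, h, rfl, rfl⟩ | ⟨a, b, h, rfl, rfl⟩ | ⟨a, b, h, rfl, rfl⟩)
  · show qLabel n τ ρ σ _ = qLabel n τ ρ σ _
    rw [qLabel_embSkip, qLabel_embSkip]
    exact congrArg Sum.inl (Quotient.sound (glue_rel_embBot h))
  · exact qLabel_inr_eq_of_rel (glue_rel_embBot h)
  · exact qLabel_inr_eq_of_rel (glue_rel_embTop h)

theorem glue_le_comap_inr_qglue : glue n τ ρ ≤ (qglue n τ ρ σ).comap Sum.inr := by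
  refine Setoid.eqvGen_le ?_
  rintro x y (⟨a, b, h, rfl, rfl⟩ | ⟨a, b, h, rfl, rfl⟩)
  · exact EqvGen.rel _ _ (Or.inr (Or.inl ⟨a, b, h, rfl, rfl⟩))
  · exact EqvGen.rel _ _ (Or.inr (Or.inr ⟨a, b, h, rfl, rfl⟩))

theorem comap_embSkip_qglue : (qglue n τ ρ σ).comap (embSkip n) = glue n (pcomp n τ ρ) σ := by
  refine le_antisymm (fun p q h => ?_) (Setoid.eqvGen_le ?_)
  · have hpq : qLabel n τ ρ σ (embSkip n p) = qLabel n τ ρ σ (embSkip n q) :=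
      qglue_le_ker_qLabel h
    rw [qLabel_embSkip, qLabel_embSkip] at hpq
    exact Quotient.exact (Sum.inl_injective hpq)
  · rintro x y (⟨a, b, h, rfl, rfl⟩ | ⟨a, b, h, rfl, rfl⟩)
    · exact EqvGen.rel _ _ (Or.inl ⟨a, b, h, rfl, rfl⟩)
    · show (qglue n τ ρ σ).r (embSkip n (embTop n a)) (embSkip n (embTop n b))
      rw [embSkip_embTop, embSkip_embTop]
      exact glue_le_comap_inr_qglue h

theorem qglue_class_subset_image_inr {u : TVert n}
    (hu : {v | (glue n τ ρ).r v u} ⊆ {x | isMiddle x}) :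
    {y | (qglue n τ ρ σ).r y (Sum.inr u)} ⊆ Sum.inr '' {v | (glue n τ ρ).r v u} := by
  have hout : ¬ ∃ a, (glue n τ ρ).r u (embOut n a) := fun ⟨a, h⟩ =>
    not_isMiddle_embOut a (hu (Setoid.symm' _ h))
  intro y hy
  have hl : qLabel n τ ρ σ y = Sum.inr (Quotient.mk _ u) :=
    (qglue_le_ker_qLabel hy).trans (dif_neg hout)
  rcases y with i | v
  · simp [qLabel] at hl
  · by_cases hv : ∃ a, (glue n τ ρ).r v (embOut n a)
    · simp [qLabel, hv] at hl
    · simp only [qLabel, hv, dite_false, Sum.inr.injEq] at hl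
      exact ⟨v, Quotient.exact hl, rfl⟩

theorem ncard_qglue_classes_midRows (τ ρ σ : Setoid (DVert n)) :
    {C ∈ (qglue n τ ρ σ).classes | C ⊆ midRows n}.ncard =
      ccount n (pcomp n τ ρ) σ + ccount n τ ρ := by
  rw [Setoid.ncard_classes_subset_eq_comap_add _ (embSkip n) compl_range_embSkip_subset_midRows,
    comap_embSkip_qglue, preimage_embSkip_midRows, compl_range_embSkip,
    Setoid.ncard_classes_subset_image Sum.inr_injective glue_le_comap_inr_qglue
      fun u hu => qglue_class_subset_image_inr hu]
  rfl

end FourRows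

def flip3 (n : ℕ) : TVert n → TVert n :=
  Sum.elim (fun i => Sum.inr (Sum.inr i)) (Sum.elim (fun i => Sum.inr (Sum.inl i)) Sum.inl)

def flip4 (n : ℕ) : QVert n → QVert n :=
  Sum.elim (fun i => Sum.inr (Sum.inr (Sum.inr i)))
    (Sum.elim (fun i => Sum.inr (Sum.inr (Sum.inl i)))
      (Sum.elim (fun i => Sum.inr (Sum.inl i)) Sum.inl))

section Duality

variable {n : ℕ}

theorem pstar_pstar (σ : Setoid (DVert n)) : pstar n (pstar n σ) = σ :=
  Setoid.ext fun x y => by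
    show σ.r x.swap.swap y.swap.swap ↔ σ.r x y
    rw [Sum.swap_swap, Sum.swap_swap]

theorem flip3_involutive : Involutive (flip3 n) := by
  rintro (i | i | i) <;> rfl

theorem flip3_embBot (a : DVert n) : flip3 n (embBot n a) = embTop n a.swap := by
  cases a <;> rfl

theorem flip3_embTop (a : DVert n) : flip3 n (embTop n a) = embBot n a.swap := by
  cases a <;> rfl

theorem flip3_embOut (a : DVert n) : flip3 n (embOut n a) = embOut n a.swap := by
  cases a <;> rfl

theorem preimage_flip3_isMiddle : flip3 n ⁻¹' {x | isMiddle x} = {x | isMiddle x} := by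
  ext x
  rcases x with i | i | i <;> simp [flip3, isMiddle]

theorem glue_pstar_le (τ ρ : Setoid (DVert n)) :
    glue n (pstar n τ) (pstar n ρ) ≤ (glue n ρ τ).comap (flip3 n) := by
  refine Setoid.eqvGen_le ?_
  rintro x y (⟨a, b, h, rfl, rfl⟩ | ⟨a, b, h, rfl, rfl⟩)
  · show (glue n ρ τ).r (flip3 n (embBot n a)) (flip3 n (embBot n b))
    rw [flip3_embBot, flip3_embBot]
    exact glue_rel_embTop h
  · show (glue n ρ τ).r (flip3 n (embTop n a)) (flip3 n (embTop n b))
    rw [flip3_embTop, flip3_embTop]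
    exact glue_rel_embBot h

theorem glue_pstar (τ ρ : Setoid (DVert n)) :
    glue n (pstar n τ) (pstar n ρ) = (glue n ρ τ).comap (flip3 n) :=
  Setoid.comap_eq_of_involutive flip3_involutive (glue_pstar_le τ ρ) <| by
    simpa only [pstar_pstar] using glue_pstar_le (pstar n ρ) (pstar n τ)

theorem pcomp_pstar (τ ρ : Setoid (DVert n)) :
    pcomp n (pstar n τ) (pstar n ρ) = pstar n (pcomp n ρ τ) :=
  Setoid.ext fun x y => by
    show (glue n (pstar n τ) (pstar n ρ)).r (embOut n x) (embOut n y) ↔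
      (glue n ρ τ).r (embOut n x.swap) (embOut n y.swap)
    rw [glue_pstar, Setoid.comap_rel, flip3_embOut, flip3_embOut]

theorem ccount_pstar (τ ρ : Setoid (DVert n)) :
    ccount n (pstar n τ) (pstar n ρ) = ccount n ρ τ := by
  have h := Setoid.ncard_classes_comap_of_surjective (glue n ρ τ) flip3_involutive.surjective
    {x | isMiddle x}
  rwa [preimage_flip3_isMiddle, ← glue_pstar] at h

theorem flip4_involutive : Involutive (flip4 n) := by
  rintro (i | i | i | i) <;> rfl

theorem preimage_flip4_midRows : flip4 n ⁻¹' midRows n = midRows n := by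
  ext x
  rcases x with i | i | i | i <;> simp [flip4, midRows]

theorem qglue_pstar_le (τ ρ σ : Setoid (DVert n)) :
    qglue n (pstar n σ) (pstar n ρ) (pstar n τ) ≤ (qglue n τ ρ σ).comap (flip4 n) := by
  refine Setoid.eqvGen_le ?_
  rintro x y (⟨a, b, h, rfl, rfl⟩ | ⟨a, b, h, rfl, rfl⟩ | ⟨a, b, h, rfl, rfl⟩) <;>
    refine EqvGen.rel _ _ ?_
  · exact Or.inr (Or.inr ⟨a.swap, b.swap, h, by cases a <;> rfl, by cases b <;> rfl⟩)
  · exact Or.inr (Or.inl ⟨a.swap, b.swap, h, by cases a <;> rfl, by cases b <;> rfl⟩)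
  · exact Or.inl ⟨a.swap, b.swap, h, by cases a <;> rfl, by cases b <;> rfl⟩

theorem qglue_pstar (τ ρ σ : Setoid (DVert n)) :
    qglue n (pstar n σ) (pstar n ρ) (pstar n τ) = (qglue n τ ρ σ).comap (flip4 n) :=
  Setoid.comap_eq_of_involutive flip4_involutive (qglue_pstar_le τ ρ σ) <| by
    simpa only [pstar_pstar] using qglue_pstar_le (pstar n σ) (pstar n ρ) (pstar n τ)

theorem ncard_qglue_pstar_classes_midRows (τ ρ σ : Setoid (DVert n)) :
    {C ∈ (qglue n (pstar n σ) (pstar n ρ) (pstar n τ)).classes | C ⊆ midRows n}.ncard =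
      {C ∈ (qglue n τ ρ σ).classes | C ⊆ midRows n}.ncard := by
  have h := Setoid.ncard_classes_comap_of_surjective (qglue n τ ρ σ) flip4_involutive.surjective
    (midRows n)
  rwa [preimage_flip4_midRows, ← qglue_pstar] at h

end Duality

/-- the middle-component count satisfies the cocycle identity
`c(τ∘ρ, σ) + c(τ,ρ) = c(τ, ρ∘σ) + c(ρ,σ)`. -/
theorem ccount_cocycle (n : ℕ) (τ ρ σ : Setoid (DVert n)) :
    ccount n (pcomp n τ ρ) σ + ccount n τ ρ = ccount n τ (pcomp n ρ σ) + ccount n ρ σ := by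
  have h₁ := ncard_qglue_classes_midRows τ ρ σ
  have h₂ := ncard_qglue_classes_midRows (pstar n σ) (pstar n ρ) (pstar n τ)
  rw [ncard_qglue_pstar_classes_midRows, pcomp_pstar, ccount_pstar, ccount_pstar] at h₂
  omega

end
end

section
/- For any nonzero δ ∈ ℂ, the bilinear product on the linear span of Pₙ given on diagrams by τ·ρ := δ^{c(τ,ρ)} (τ ∘ ρ) is associative, making the partition algebra 𝐏ₙ(δ) an associative algebra. -/
open scoped Classical
open Relation
noncomputable section

/-!
Stack `σ`, `ρ`, `τ` on four levels of `n` points (`σ` joining levels 0–1, `ρ` levels 1–2, `τ`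
levels 2–3) and let `χ` be the equivalence relation they generate. If a relation `a` only
identifies points of a subset `U`, then the restriction of `a ⊔ b` to `U` is generated by the
restrictions of `a` and `b`; applied to levels `{0, 1, 3}` and `{0, 2, 3}` this shows that both
gluings `glue (τ ∘ ρ) σ` and `glue τ (ρ ∘ σ)` are restrictions of `χ`, so `(τ ∘ ρ) ∘ σ` and
`τ ∘ (ρ ∘ σ)` are both the restriction of `χ` to levels 0 and 3. For the scalars, the
classes of `χ` inside levels 1 and 2 are counted by `c(τ ∘ ρ, σ)` (those meeting level 1) plus
`c(τ, ρ)` (those inside level 2), since `σ` does not reach level 2; symmetrically they are counted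
by `c(τ, ρ ∘ σ) + c(ρ, σ)`.
-/

namespace Setoid

variable {α β γ δ : Type*}

theorem gc_map_comap (f : α → β) : GaloisConnection (fun r : Setoid α => r.map f) (comap f) :=
  fun _ _ => ⟨fun h => le_comap_map.trans fun _ _ hxy => h hxy,
    fun h => eqvGen_le fun _ _ ⟨_, _, hab, ha, hb⟩ => ha ▸ hb ▸ h hab⟩

theorem map_sup (r s : Setoid α) (f : α → β) : (r ⊔ s).map f = r.map f ⊔ s.map f :=
  (gc_map_comap f).l_sup

theorem map_map (r : Setoid α) (f : α → β) (g : β → γ) : (r.map f).map g = r.map (g ∘ f) :=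
  ((gc_map_comap f).compose (gc_map_comap g)).l_unique (gc_map_comap (g ∘ f)) fun _ => rfl

theorem map_rel_mem_range {r : Setoid α} {f : α → β} {x y : β} (h : r.map f x y) (hxy : x ≠ y) :
    x ∈ Set.range f := by
  have key : ∀ x y, r.map f x y → x = y ∨ x ∈ Set.range f ∧ y ∈ Set.range f := by
    intro x y h
    induction h with
    | rel _ _ h => obtain ⟨a, b, -, rfl, rfl⟩ := h; exact .inr ⟨⟨a, rfl⟩, b, rfl⟩
    | refl => exact .inl rfl
    | symm _ _ _ ih => exact ih.imp Eq.symm And.symm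
    | trans _ _ _ _ _ ih₁ ih₂ =>
      rcases ih₁ with rfl | ⟨hx, hy⟩
      · exact ih₂
      · exact .inr ⟨hx, ih₂.elim (· ▸ hy) And.right⟩
  exact ((key x y h).resolve_left hxy).1

theorem map_rel_iff_of_injective {r : Setoid α} {f : α → β} (hf : f.Injective) {x y : β} :
    r.map f x y ↔ (∃ a b, r a b ∧ f a = x ∧ f b = y) ∨ x = y := by
  rw [coe_map_of_ker_le r f (ker_eq_bot_iff.2 hf ▸ bot_le)]
  rfl

theorem comap_sup_of_rel_mem_range {f : α → β} {a b : Setoid β}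
    (ha : ∀ ⦃x y⦄, a x y → x ≠ y → x ∈ Set.range f) :
    (a ⊔ b).comap f = a.comap f ⊔ b.comap f := by
  refine le_antisymm ?_ (sup_le (fun _ _ h => (le_sup_left : a ≤ a ⊔ b) h)
    fun _ _ h => (le_sup_right : b ≤ a ⊔ b) h)
  set e := a.comap f ⊔ b.comap f
  have hbe : b.comap f ≤ e := le_sup_right
  -- `ψ` is constant on `a`- and `b`-classes and reads off the `e`-class on the range of `f`.
  let ψ : β → Quotient e ⊕ Quotient b := fun x =>
    if h : ∃ u, b x (f u) then .inl ⟦h.choose⟧ else .inr ⟦x⟧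
  have hψ : ∀ u, ψ (f u) = .inl ⟦u⟧ := fun u => by
    have h : ∃ v, b (f u) (f v) := ⟨u, b.refl' _⟩
    simp only [ψ, dif_pos h]
    exact congrArg Sum.inl (Quotient.sound (hbe (b.symm' h.choose_spec)))
  have hb : b ≤ ker ψ := fun x y hxy => by
    by_cases h : ∃ u, b x (f u)
    · have h' : ∃ u, b y (f u) := h.imp fun _ hu => b.trans' (b.symm' hxy) hu
      simp only [ker_def, ψ, dif_pos h, dif_pos h']
      exact congrArg Sum.inl (Quotient.sound (hbe
        (b.trans' (b.symm' h.choose_spec) (b.trans' hxy h'.choose_spec))))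
    · have h' : ¬ ∃ u, b y (f u) := fun ⟨u, hu⟩ => h ⟨u, b.trans' hxy hu⟩
      simp only [ker_def, ψ, dif_neg h, dif_neg h']
      exact congrArg Sum.inr (Quotient.sound hxy)
  have ha' : a ≤ ker ψ := fun x y hxy => by
    by_cases hxy' : x = y
    · rw [hxy', ker_def]
    obtain ⟨u, rfl⟩ := ha hxy hxy'
    obtain ⟨v, rfl⟩ := ha (a.symm' hxy) (Ne.symm hxy')
    rw [ker_def, hψ, hψ]
    exact congrArg Sum.inl (Quotient.sound ((le_sup_left : a.comap f ≤ e) hxy))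
  intro u v huv
  have := sup_le ha' hb huv
  rw [ker_def, hψ, hψ] at this
  exact Quotient.exact (Sum.inl_injective this)

theorem comap_map_of_isPullback {f : α → γ} {g : β → γ} {i : δ → α} {j : δ → β}
    (hf : f.Injective) (hg : g.Injective) (hi : i.Injective) (hcomm : f ∘ i = g ∘ j)
    (hpb : ∀ a b, f a = g b → ∃ d, i d = a ∧ j d = b) (r : Setoid β) :
    (r.map g).comap f = (r.comap j).map i := by
  ext a a'
  rw [comap_rel, map_rel_iff_of_injective hg, map_rel_iff_of_injective hi, hf.eq_iff]
  refine or_congr_left ⟨?_, ?_⟩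
  · rintro ⟨b, b', hbb', hb, hb'⟩
    obtain ⟨d, rfl, rfl⟩ := hpb _ _ hb.symm
    obtain ⟨d', rfl, rfl⟩ := hpb _ _ hb'.symm
    exact ⟨d, d', hbb', rfl, rfl⟩
  · rintro ⟨d, d', hdd', rfl, rfl⟩
    exact ⟨j d, j d', hdd', (congrFun hcomm d).symm, (congrFun hcomm d').symm⟩

theorem ncard_classes_comap (f : α → β) (s : Setoid β) (P : α → Prop) :
    {C ∈ (s.comap f).classes | ∀ x ∈ C, P x}.ncard =
      {D ∈ s.classes | (∃ x, f x ∈ D) ∧ ∀ x, f x ∈ D → P x}.ncard := by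
  have hinj : Set.InjOn (f ⁻¹' ·) {D ∈ s.classes | (∃ x, f x ∈ D) ∧ ∀ x, f x ∈ D → P x} := by
    rintro D ⟨hD, ⟨x, hx⟩, -⟩ D' ⟨hD', -⟩ h
    have h : f ⁻¹' D = f ⁻¹' D' := h
    exact eq_of_mem_classes hD hx hD' (show x ∈ f ⁻¹' D' from h ▸ hx)
  rw [← hinj.ncard_image]
  congr 1
  ext C
  constructor
  · rintro ⟨⟨y, rfl⟩, hP⟩
    exact ⟨{z | s z (f y)}, ⟨s.mem_classes _, ⟨y, s.refl' _⟩, hP⟩, rfl⟩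
  · rintro ⟨D, ⟨⟨w, rfl⟩, ⟨y, hy⟩, hP⟩, rfl⟩
    exact ⟨⟨y, Set.ext fun x => ⟨fun hx => s.trans' hx (s.symm' hy), fun hx => s.trans' hx hy⟩⟩,
      hP⟩

theorem ncard_classes_map {r : Setoid α} {f : α → β} (hf : f.Injective) (P : α → Prop) :
    {C ∈ r.classes | ∀ x ∈ C, P x}.ncard =
      {D ∈ (r.map f).classes | ∀ y ∈ D, ∃ x, P x ∧ f x = y}.ncard := by
  conv_lhs => rw [← comap_map_eq f r hf]
  rw [ncard_classes_comap]
  congr 1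
  ext D
  refine and_congr_right ?_
  rintro ⟨w, rfl⟩
  constructor
  · rintro ⟨⟨x₀, hx₀⟩, hP⟩ y hy
    by_cases hyx : y = f x₀
    · exact ⟨x₀, hP x₀ hx₀, hyx.symm⟩
    · obtain ⟨x, rfl⟩ := map_rel_mem_range ((r.map f).trans' hy ((r.map f).symm' hx₀)) hyx
      exact ⟨x, hP x hy, rfl⟩
  · intro hD
    obtain ⟨x, -, hx⟩ := hD w ((r.map f).refl' w)
    refine ⟨⟨x, hx ▸ (r.map f).refl' w⟩, fun x' hx' => ?_⟩
    obtain ⟨x'', hP, h⟩ := hD _ hx'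
    exact hf h ▸ hP

theorem sep_classes_sup_eq_of_rel_ne {a b : Setoid α} {P : α → Prop}
    (ha : ∀ ⦃x y⦄, a x y → x ≠ y → ¬ P x) :
    {D ∈ (a ⊔ b).classes | ∀ x ∈ D, P x} = {D ∈ b.classes | ∀ x ∈ D, P x} := by
  have key : ∀ w, (∀ y, b y w → P y) → {y | (a ⊔ b) y w} = {y | b y w} := by
    intro w hw
    refine Set.Subset.antisymm (fun y hy => ?_) fun y hy => (le_sup_right : b ≤ a ⊔ b) hy
    -- `a` only moves points outside `P`, hence never into or out of the `b`-class of `w`.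
    have hker : a ⊔ b ≤ ker fun y => b y w := by
      refine sup_le (fun y z hyz => ?_) fun y z hyz =>
        propext ⟨b.trans' (b.symm' hyz), b.trans' hyz⟩
      by_cases h : y = z
      · rw [h, ker_def]
      · exact propext ⟨fun h' => absurd (hw y h') (ha hyz h),
          fun h' => absurd (hw z h') (ha (a.symm' hyz) (Ne.symm h))⟩
    have h : b y w = b w w := ker_def.1 (hker hy)
    show b y w
    rw [h]
  ext D
  constructor
  · rintro ⟨⟨w, rfl⟩, hP⟩
    have hw : ∀ y, b y w → P y := fun y hy => hP y ((le_sup_right : b ≤ a ⊔ b) hy)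
    exact ⟨⟨w, key w hw⟩, hP⟩
  · rintro ⟨⟨w, rfl⟩, hP⟩
    exact ⟨⟨w, (key w hP).symm⟩, hP⟩

end Setoid

theorem Set.ncard_sep_forall_or {α : Type*} [Finite α] (𝒟 : Set (Set α)) {P Q : α → Prop}
    (hPQ : ∀ x, P x → ¬ Q x) :
    {D ∈ 𝒟 | ∀ x ∈ D, P x ∨ Q x}.ncard =
      {D ∈ 𝒟 | (∀ x ∈ D, P x ∨ Q x) ∧ ∃ x ∈ D, P x}.ncard +
        {D ∈ 𝒟 | ∀ x ∈ D, Q x}.ncard := by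
  have hdisj : Disjoint {D ∈ 𝒟 | (∀ x ∈ D, P x ∨ Q x) ∧ ∃ x ∈ D, P x}
      {D ∈ 𝒟 | ∀ x ∈ D, Q x} := by
    rw [Set.disjoint_left]
    rintro D ⟨-, -, x, hx, hP⟩ ⟨-, hQ⟩
    exact hPQ x hP (hQ x hx)
  rw [← Set.ncard_union_eq hdisj]
  congr 1
  ext D
  constructor
  · rintro ⟨hD, h⟩
    by_cases hP : ∃ x ∈ D, P x
    · exact .inl ⟨hD, h, hP⟩
    · exact .inr ⟨hD, fun x hx => (h x hx).resolve_left fun hx' => hP ⟨x, hx, hx'⟩⟩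
  · rintro (⟨hD, h, -⟩ | ⟨hD, h⟩)
    · exact ⟨hD, h⟩
    · exact ⟨hD, fun x hx => .inr (h x hx)⟩

def DVert.place {n : ℕ} (a b : Fin 4) : DVert n → Fin 4 × Fin n := Sum.elim (a, ·) (b, ·)

def TVert.place {n : ℕ} (a b c : Fin 4) : TVert n → Fin 4 × Fin n :=
  Sum.elim (a, ·) (Sum.elim (b, ·) (c, ·))

section Place

variable {n : ℕ} (a b c : Fin 4)

theorem TVert.place_comp_embBot : TVert.place a b c ∘ embBot n = DVert.place a b := by
  ext (i | i) <;> rfl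

theorem TVert.place_comp_embTop : TVert.place a b c ∘ embTop n = DVert.place b c := by
  ext (i | i) <;> rfl

theorem TVert.place_comp_embOut : TVert.place a b c ∘ embOut n = DVert.place a c := by
  ext (i | i) <;> rfl

theorem TVert.place_injective (h : [a, b, c].Nodup) : (TVert.place (n := n) a b c).Injective := by
  simp only [List.nodup_cons, List.mem_cons, List.not_mem_nil, or_false, not_or] at h
  rintro (i | i | i) (j | j | j) hij <;> simp_all [TVert.place, Prod.ext_iff, eq_comm]

theorem embBot_injective : (embBot n).Injective := by
  rintro (i | i) (j | j) h <;> simp_all [embBot]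

theorem embTop_injective : (embTop n).Injective := by
  rintro (i | i) (j | j) h <;> simp_all [embTop]

theorem fst_eq_or_of_map_place_rel {r : Setoid (DVert n)} {x y : Fin 4 × Fin n}
    (h : r.map (DVert.place a b) x y) (hxy : x ≠ y) : x.1 = a ∨ x.1 = b := by
  obtain ⟨i | i, rfl⟩ := Setoid.map_rel_mem_range h hxy <;> simp [DVert.place]

theorem TVert.exists_isMiddle_place_eq {z : Fin 4 × Fin n} :
    (∃ x, isMiddle x ∧ TVert.place a b c x = z) ↔ z.1 = b := by
  obtain ⟨k, i⟩ := z
  simp [TVert.place, isMiddle, eq_comm]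

end Place

theorem glue_eq_sup (n : ℕ) (τ ρ : Setoid (DVert n)) :
    glue n τ ρ = ρ.map (embBot n) ⊔ τ.map (embTop n) := by
  refine le_antisymm (Setoid.eqvGen_le ?_) (sup_le ?_ ?_)
  · rintro _ _ (⟨a, b, h, rfl, rfl⟩ | ⟨a, b, h, rfl, rfl⟩)
    · exact (le_sup_left : ρ.map (embBot n) ≤ _) (Setoid.le_comap_map h)
    · exact (le_sup_right : τ.map (embTop n) ≤ _) (Setoid.le_comap_map h)
  · exact (Setoid.gc_map_comap _).l_le fun a b h => EqvGen.rel _ _ (.inl ⟨a, b, h, rfl, rfl⟩)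
  · exact (Setoid.gc_map_comap _).l_le fun a b h => EqvGen.rel _ _ (.inr ⟨a, b, h, rfl, rfl⟩)

theorem pcomp_eq_comap (n : ℕ) (τ ρ : Setoid (DVert n)) :
    pcomp n τ ρ = (glue n τ ρ).comap (embOut n) :=
  Setoid.ext fun _ _ => Iff.rfl

/-- Level `0` carries the unprimed points of `σ`, level `3` the primed points of `τ`. -/
def stackGlue (n : ℕ) (τ ρ σ : Setoid (DVert n)) : Setoid (Fin 4 × Fin n) :=
  σ.map (DVert.place 0 1) ⊔ ρ.map (DVert.place 1 2) ⊔ τ.map (DVert.place 2 3)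

section Stack

variable {n : ℕ} (τ ρ σ : Setoid (DVert n))

theorem stackGlue_eq_sup_glue_top :
    stackGlue n τ ρ σ = σ.map (DVert.place 0 1) ⊔ (glue n τ ρ).map (TVert.place 1 2 3) := by
  rw [glue_eq_sup, Setoid.map_sup, Setoid.map_map, Setoid.map_map, TVert.place_comp_embBot,
    TVert.place_comp_embTop, stackGlue, sup_assoc]

theorem stackGlue_eq_sup_glue_bot :
    stackGlue n τ ρ σ = τ.map (DVert.place 2 3) ⊔ (glue n ρ σ).map (TVert.place 0 1 2) := by
  rw [glue_eq_sup, Setoid.map_sup, Setoid.map_map, Setoid.map_map, TVert.place_comp_embBot,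
    TVert.place_comp_embTop, stackGlue, sup_comm]

theorem glue_pcomp_left :
    glue n (pcomp n τ ρ) σ = (stackGlue n τ ρ σ).comap (TVert.place 0 1 3) := by
  have hinj := TVert.place_injective (n := n) 0 1 3 (by decide)
  have hsupp : ∀ ⦃x y⦄, σ.map (DVert.place 0 1) x y → x ≠ y →
      x ∈ Set.range (TVert.place (n := n) 0 1 3) := fun x y h hxy => by
    rw [← TVert.place_comp_embBot 0 1 3] at h
    exact Set.range_comp_subset_range _ _ (Setoid.map_rel_mem_range h hxy)
  have hpb : ∀ x y, TVert.place 0 1 3 x = TVert.place 1 2 3 y →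
      ∃ d, embTop n d = x ∧ embOut n d = y := by
    rintro (i | i | i) (j | j | j) h <;> simp [TVert.place, Prod.ext_iff] at h
    · exact ⟨.inl i, rfl, h ▸ rfl⟩
    · exact ⟨.inr i, rfl, h ▸ rfl⟩
  rw [stackGlue_eq_sup_glue_top, Setoid.comap_sup_of_rel_mem_range hsupp,
    ← TVert.place_comp_embBot 0 1 3, ← Setoid.map_map, Setoid.comap_map_eq _ _ hinj,
    Setoid.comap_map_of_isPullback hinj (TVert.place_injective 1 2 3 (by decide))
      embTop_injective (by rw [TVert.place_comp_embTop, TVert.place_comp_embOut]) hpb,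
    glue_eq_sup, pcomp_eq_comap]

theorem glue_pcomp_right :
    glue n τ (pcomp n ρ σ) = (stackGlue n τ ρ σ).comap (TVert.place 0 2 3) := by
  have hinj := TVert.place_injective (n := n) 0 2 3 (by decide)
  have hsupp : ∀ ⦃x y⦄, τ.map (DVert.place 2 3) x y → x ≠ y →
      x ∈ Set.range (TVert.place (n := n) 0 2 3) := fun x y h hxy => by
    rw [← TVert.place_comp_embTop 0 2 3] at h
    exact Set.range_comp_subset_range _ _ (Setoid.map_rel_mem_range h hxy)
  have hpb : ∀ x y, TVert.place 0 2 3 x = TVert.place 0 1 2 y →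
      ∃ d, embBot n d = x ∧ embOut n d = y := by
    rintro (i | i | i) (j | j | j) h <;> simp [TVert.place, Prod.ext_iff] at h
    · exact ⟨.inl i, rfl, h ▸ rfl⟩
    · exact ⟨.inr i, rfl, h ▸ rfl⟩
  rw [stackGlue_eq_sup_glue_bot, Setoid.comap_sup_of_rel_mem_range hsupp,
    ← TVert.place_comp_embTop 0 2 3, ← Setoid.map_map, Setoid.comap_map_eq _ _ hinj,
    Setoid.comap_map_of_isPullback hinj (TVert.place_injective 0 1 2 (by decide))
      embBot_injective (by rw [TVert.place_comp_embBot, TVert.place_comp_embOut]) hpb,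
    glue_eq_sup, pcomp_eq_comap, sup_comm]

theorem pcomp_assoc : pcomp n (pcomp n τ ρ) σ = pcomp n τ (pcomp n ρ σ) := by
  rw [pcomp_eq_comap n (pcomp n τ ρ) σ, pcomp_eq_comap n τ (pcomp n ρ σ), glue_pcomp_left,
    glue_pcomp_right, ← Setoid.comap_comp _ _ (embOut n), ← Setoid.comap_comp _ _ (embOut n),
    TVert.place_comp_embOut, TVert.place_comp_embOut]

theorem ccount_pcomp_left_eq_stackGlue : ccount n (pcomp n τ ρ) σ =
    {D ∈ (stackGlue n τ ρ σ).classes | (∀ z ∈ D, z.1 = 1 ∨ z.1 = 2) ∧ ∃ z ∈ D, z.1 = 1}.ncard := by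
  rw [ccount, glue_pcomp_left, Setoid.ncard_classes_comap]
  congr 1
  ext D
  refine and_congr_right fun _ => ?_
  simp [Sum.exists, Sum.forall, TVert.place, isMiddle, Prod.forall, Fin.forall_fin_succ]
  aesop

theorem ccount_pcomp_right_eq_stackGlue : ccount n τ (pcomp n ρ σ) =
    {D ∈ (stackGlue n τ ρ σ).classes | (∀ z ∈ D, z.1 = 2 ∨ z.1 = 1) ∧ ∃ z ∈ D, z.1 = 2}.ncard := by
  rw [ccount, glue_pcomp_right, Setoid.ncard_classes_comap]
  congr 1
  ext D
  refine and_congr_right fun _ => ?_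
  simp [Sum.exists, Sum.forall, TVert.place, isMiddle, Prod.forall, Fin.forall_fin_succ]
  aesop

theorem ccount_eq_stackGlue_level_two :
    ccount n τ ρ = {D ∈ (stackGlue n τ ρ σ).classes | ∀ z ∈ D, z.1 = 2}.ncard := by
  rw [ccount, Setoid.ncard_classes_map (TVert.place_injective 1 2 3 (by decide))]
  simp_rw [TVert.exists_isMiddle_place_eq]
  rw [stackGlue_eq_sup_glue_top, Setoid.sep_classes_sup_eq_of_rel_ne]
  intro x y h hxy
  rcases fst_eq_or_of_map_place_rel 0 1 h hxy with h | h <;> rw [h] <;> decide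

theorem ccount_eq_stackGlue_level_one :
    ccount n ρ σ = {D ∈ (stackGlue n τ ρ σ).classes | ∀ z ∈ D, z.1 = 1}.ncard := by
  rw [ccount, Setoid.ncard_classes_map (TVert.place_injective 0 1 2 (by decide))]
  simp_rw [TVert.exists_isMiddle_place_eq]
  rw [stackGlue_eq_sup_glue_bot, Setoid.sep_classes_sup_eq_of_rel_ne]
  intro x y h hxy
  rcases fst_eq_or_of_map_place_rel 2 3 h hxy with h | h <;> rw [h] <;> decide

theorem ccount_assoc : ccount n (pcomp n τ ρ) σ + ccount n τ ρ =
    ccount n τ (pcomp n ρ σ) + ccount n ρ σ := by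
  rw [ccount_pcomp_left_eq_stackGlue, ccount_eq_stackGlue_level_two τ ρ σ,
    ← Set.ncard_sep_forall_or, ccount_pcomp_right_eq_stackGlue,
    ccount_eq_stackGlue_level_one τ ρ σ, ← Set.ncard_sep_forall_or]
  · simp_rw [or_comm]
  all_goals intro z h h'; rw [h] at h'; exact absurd h' (by decide)

end Stack

section Algebra

variable {n : ℕ} (δ : ℂ)

theorem pmul_single_single (τ ρ : Setoid (DVert n)) (a b : ℂ) :
    pmul n δ (Finsupp.single τ a) (Finsupp.single ρ b) =
      Finsupp.single (pcomp n τ ρ) (δ ^ ccount n τ ρ * (a * b)) := by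
  rw [pmul, Finsupp.sum_single_index (by simp), Finsupp.sum_single_index (by simp)]

theorem pmul_zero_left (g : Setoid (DVert n) →₀ ℂ) : pmul n δ 0 g = 0 := by
  simp [pmul]

theorem pmul_zero_right (f : Setoid (DVert n) →₀ ℂ) : pmul n δ f 0 = 0 := by
  simp [pmul]

theorem pmul_add_left (f f' g : Setoid (DVert n) →₀ ℂ) :
    pmul n δ (f + f') g = pmul n δ f g + pmul n δ f' g := by
  refine Finsupp.sum_add_index' (fun _ => by simp) fun _ a a' => ?_
  rw [← Finsupp.sum_add]
  simp only [mul_add, add_mul, Finsupp.single_add]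

theorem pmul_add_right (f g g' : Setoid (DVert n) →₀ ℂ) :
    pmul n δ f (g + g') = pmul n δ f g + pmul n δ f g' := by
  rw [pmul, pmul, pmul, ← Finsupp.sum_add]
  refine Finsupp.sum_congr fun _ _ => Finsupp.sum_add_index' (fun _ => by simp) fun _ b b' => ?_
  simp only [mul_add, Finsupp.single_add]

end Algebra

theorem partition_algebra_assoc_general (n : ℕ) (δ : ℂ)
    (f g h : Setoid (DVert n) →₀ ℂ) :
    pmul n δ (pmul n δ f g) h = pmul n δ f (pmul n δ g h) := by
  induction f using Finsupp.induction_linear with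
  | zero => simp only [pmul_zero_left]
  | add f₁ f₂ ih₁ ih₂ => simp only [pmul_add_left, ih₁, ih₂]
  | single τ a =>
    induction g using Finsupp.induction_linear with
    | zero => simp only [pmul_zero_left, pmul_zero_right]
    | add g₁ g₂ ih₁ ih₂ => simp only [pmul_add_left, pmul_add_right, ih₁, ih₂]
    | single ρ b =>
      induction h using Finsupp.induction_linear with
      | zero => simp only [pmul_zero_right]
      | add h₁ h₂ ih₁ ih₂ => simp only [pmul_add_right, ih₁, ih₂]
      | single σ c =>
        have hexp := congrArg (δ ^ ·) (ccount_assoc τ ρ σ)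
        simp only [pow_add] at hexp
        rw [pmul_single_single, pmul_single_single, pmul_single_single, pmul_single_single,
          pcomp_assoc]
        congr 1
        linear_combination a * b * c * hexp

/-- for nonzero `δ`, the product `τ·ρ = δ^{c(τ,ρ)} (τ∘ρ)` on the linear span
of `Pₙ` is associative, making the partition algebra `𝐏ₙ(δ)` an associative algebra. -/
theorem partition_algebra_assoc (n : ℕ) (δ : ℂ) (hδ : δ ≠ 0)
    (f g h : Setoid (DVert n) →₀ ℂ) :
    pmul n δ (pmul n δ f g) h = pmul n δ f (pmul n δ g h) :=
  partition_algebra_assoc_general n δ f g h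

end
end
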